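/- arXiv:2310.00327 — 5 statements merged into one kernel-verified Lean document; each statement's English description precedes it below -/
import Mathlib

section
/- Let X⁻, X⁺ ⊂ ℝ^d be nonempty, finite and disjoint, and let σ: ℝ → ℝ satisfy σ(t) = 0 for t ≤ 0 and σ(t) > 0 for t > 0. Let w_1, …, w_n ∈ ℝ^d and b_1, …, b_n ∈ ℝ and define Φ: ℝ^d → ℝ^n by Φ_i(x) = σ(⟨w_i, x⟩ + b_i). Assume that for every pair (x⁻, x⁺) ∈ X⁻ × X⁺ there exists i ∈ {1, …, n} with ⟨w_i, x⁻⟩ ≤ −b_i < ⟨w_i, x⁺⟩. For y ∈ X⁻ define u_y ∈ {0,1}^n by (u_y)_i = 1 if Φ_i(y) = 0 and (u_y)_i = 0 otherwise, and m_y = min_{x⁺ ∈ X⁺} ⟨u_y, Φ(x⁺)⟩. Define F: ℝ^d → {±1} by F(x) = sign(−Σ_{y ∈ X⁻} σ(−⟨u_y, Φ(x)⟩ + m_y)). Then F(x⁻) = −1 for all x⁻ ∈ X⁻ and F(x⁺) = +1 for all x⁺ ∈ X⁺. -/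
open MeasureTheory Real
open scoped RealInnerProductSpace BigOperators

noncomputable def rsign (x : ℝ) : ℝ := if 0 ≤ x then 1 else -1

/-- (correctness of the constructed two-hidden-layer network: if every pair
of oppositely labeled points is separated by some hyperplane of the first layer, then the
network `F` interpolates `X⁻` and `X⁺`). -/
theorem network_interpolates
    (d n : ℕ) (σ : ℝ → ℝ)
    (hσ0 : ∀ t : ℝ, t ≤ 0 → σ t = 0) (hσpos : ∀ t : ℝ, 0 < t → 0 < σ t)
    (Xm Xp : Finset (EuclideanSpace ℝ (Fin d)))
    (hXm : Xm.Nonempty) (hXp : Xp.Nonempty) (hdisj : Disjoint Xm Xp)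
    (w : Fin n → EuclideanSpace ℝ (Fin d)) (b : Fin n → ℝ)
    (Φ : EuclideanSpace ℝ (Fin d) → Fin n → ℝ)
    (hΦ : ∀ x i, Φ x i = σ (⟪w i, x⟫ + b i))
    (hsep : ∀ xm ∈ Xm, ∀ xp ∈ Xp,
      ∃ i : Fin n, ⟪w i, xm⟫ ≤ -(b i) ∧ -(b i) < ⟪w i, xp⟫)
    (u : EuclideanSpace ℝ (Fin d) → Fin n → ℝ)
    (hu : ∀ y i, u y i = if Φ y i = 0 then 1 else 0)
    (m : EuclideanSpace ℝ (Fin d) → ℝ)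
    (hm : ∀ y, m y = Xp.inf' hXp (fun xp => ∑ i, u y i * Φ xp i))
    (F : EuclideanSpace ℝ (Fin d) → ℝ)
    (hF : ∀ x, F x = rsign (-(∑ y ∈ Xm, σ (-(∑ i, u y i * Φ x i) + m y)))) :
    (∀ xm ∈ Xm, F xm = -1) ∧ (∀ xp ∈ Xp, F xp = 1) := by
  have hσnn : ∀ t : ℝ, 0 ≤ σ t := fun t => by
    rcases le_or_gt t 0 with h | h
    · rw [hσ0 t h]
    · exact (hσpos t h).le
  have hΦnn : ∀ x i, 0 ≤ Φ x i := fun x i => by rw [hΦ]; exact hσnn _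
  have hunn : ∀ y i, 0 ≤ u y i := fun y i => by rw [hu]; split <;> norm_num
  have hself : ∀ y, ∑ i, u y i * Φ y i = 0 := fun y => by
    apply Finset.sum_eq_zero
    intro i _
    rw [hu]
    by_cases h : Φ y i = 0
    · rw [if_pos h, h, mul_zero]
    · rw [if_neg h, zero_mul]
  have hmpos : ∀ y ∈ Xm, 0 < m y := by
    intro y hy
    rw [hm, Finset.lt_inf'_iff]
    intro xp hxp
    obtain ⟨i, h1, h2⟩ := hsep y hy xp hxp
    apply Finset.sum_pos'
    · intro j _; exact mul_nonneg (hunn _ _) (hΦnn _ _)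
    · refine ⟨i, Finset.mem_univ i, ?_⟩
      have hΦy : Φ y i = 0 := by rw [hΦ, hσ0]; linarith
      have hΦxp : 0 < Φ xp i := by rw [hΦ]; exact hσpos _ (by linarith)
      rw [hu, if_pos hΦy, one_mul]
      exact hΦxp
  constructor
  · intro xm hxm
    have hpos : 0 < ∑ y ∈ Xm, σ (-(∑ i, u y i * Φ xm i) + m y) := by
      apply Finset.sum_pos'
      · intro y _; exact hσnn _
      · refine ⟨xm, hxm, ?_⟩
        rw [hself xm]
        exact hσpos _ (by simpa using hmpos xm hxm)
    rw [hF, rsign, if_neg (by linarith)]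
  · intro xp hxp
    have hz : ∑ y ∈ Xm, σ (-(∑ i, u y i * Φ xp i) + m y) = 0 := by
      apply Finset.sum_eq_zero
      intro y hy
      apply hσ0
      have h : Xp.inf' hXp (fun z => ∑ i, u y i * Φ z i) ≤ ∑ i, u y i * Φ xp i := Finset.inf'_le _ hxp
      rw [hm]
      linarith
    rw [hF, hz, rsign, if_pos (by norm_num)]
end

section
/- There exists an absolute constant C > 0 with the following property. Let X⁻, X⁺ ⊂ R·B₂^d be nonempty, finite and disjoint, and let λ ≥ C·R. Let (w_i, b_i), i ∈ ℕ, be an i.i.d. sequence with w_i ~ N(0, I_d) a standard Gaussian vector and b_i uniformly distributed on [−λ, λ], independent. Then almost surely there exists n ∈ ℕ such that for every pair (x⁻, x⁺) ∈ X⁻ × X⁺ there exists i ∈ {1, …, n} with ⟨w_i, x⁻⟩ ≤ −b_i < ⟨w_i, x⁺⟩. -/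
open MeasureTheory ProbabilityTheory Real
open scoped RealInnerProductSpace ENNReal

noncomputable def stdGaussian (d : ℕ) : Measure (EuclideanSpace ℝ (Fin d)) :=
  (Measure.pi fun _ : Fin d => gaussianReal 0 1).map (WithLp.toLp 2)

noncomputable def unifIcc (lam : ℝ) : Measure ℝ :=
  (ENNReal.ofReal (2 * lam))⁻¹ • (volume.restrict (Set.Icc (-lam) lam))

instance : (gaussianReal 0 1).IsOpenPosMeasure := by
  constructor
  intro U hU hne h0
  exact (hU.measure_pos volume hne).ne' ((gaussianReal_absolutelyContinuous' 0 one_ne_zero) h0)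

instance (d : ℕ) : (stdGaussian d).IsOpenPosMeasure := by
  unfold _root_.stdGaussian
  exact (PiLp.continuous_toLp 2 _).isOpenPosMeasure_map fun x => ⟨x.ofLp, rfl⟩

instance (d : ℕ) : IsProbabilityMeasure (stdGaussian d) := by
  unfold _root_.stdGaussian
  exact Measure.isProbabilityMeasure_map (PiLp.continuous_toLp 2 _).aemeasurable

lemma unifIcc_prob {lam : ℝ} (hlam : 0 < lam) : IsProbabilityMeasure (unifIcc lam) := by
  constructor
  rw [unifIcc]
  simp only [Measure.smul_apply, Measure.restrict_apply MeasurableSet.univ, Set.univ_inter,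
    Real.volume_Icc, smul_eq_mul]
  rw [show lam - -lam = 2 * lam by ring]
  exact ENNReal.inv_mul_cancel (by simp [hlam]) ENNReal.ofReal_ne_top

lemma unifIcc_open_pos {lam : ℝ} (hlam : 0 < lam) {I : Set ℝ} (hI : IsOpen I) {b : ℝ}
    (hb : b ∈ I) (hb' : |b| < lam) : 0 < unifIcc lam I := by
  rw [unifIcc]
  simp only [Measure.smul_apply, Measure.restrict_apply hI.measurableSet, smul_eq_mul]
  apply ENNReal.mul_pos
  · exact ENNReal.inv_ne_zero.mpr ENNReal.ofReal_ne_top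
  · have h1 : 0 < volume (I ∩ Set.Ioo (-lam) lam) := by
      refine (hI.inter isOpen_Ioo).measure_pos volume ⟨b, hb, ?_, ?_⟩
      · exact neg_lt_of_abs_lt hb'
      · exact lt_of_abs_lt hb'
    refine (lt_of_lt_of_le h1 (measure_mono ?_)).ne'
    exact Set.inter_subset_inter_right _ Set.Ioo_subset_Icc_self

lemma sep_pos {d : ℕ} {lam : ℝ} (hlam : 0 < lam) (xm xp : EuclideanSpace ℝ (Fin d))
    (hne : xm ≠ xp) :
    0 < ((stdGaussian d).prod (unifIcc lam))
        {p : EuclideanSpace ℝ (Fin d) × ℝ | ⟪p.1, xm⟫ ≤ -p.2 ∧ -p.2 < ⟪p.1, xp⟫} := by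
  haveI := unifIcc_prob hlam
  set u : EuclideanSpace ℝ (Fin d) := xp - xm with hu_def
  have hu : u ≠ 0 := sub_ne_zero.mpr (Ne.symm hne)
  set M : ℝ := ‖u‖ * (‖xm‖ + ‖xp‖) / 2 with hM_def
  have hM : 0 ≤ M := by positivity
  set s : ℝ := lam / (M + 1) with hs_def
  have hs : 0 < s := div_pos hlam (by linarith)
  set w₀ : EuclideanSpace ℝ (Fin d) := s • u with hw0
  set b₀ : ℝ := -((⟪w₀, xm⟫ + ⟪w₀, xp⟫) / 2) with hb0
  have hdiff : ⟪w₀, xp⟫ - ⟪w₀, xm⟫ = s * ‖u‖ ^ 2 := by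
    rw [← inner_sub_right, hw0, real_inner_smul_left, hu_def, real_inner_self_eq_norm_sq]
  have hdpos : 0 < s * ‖u‖ ^ 2 := by
    have : 0 < ‖u‖ := norm_pos_iff.mpr hu
    positivity
  have hlt1 : ⟪w₀, xm⟫ < -b₀ := by rw [hb0]; push_cast; linarith [hdiff, hdpos]
  have hlt2 : -b₀ < ⟪w₀, xp⟫ := by rw [hb0]; push_cast; linarith [hdiff, hdpos]
  have habs : |b₀| < lam := by
    have h1 : |⟪w₀, xm⟫| ≤ ‖w₀‖ * ‖xm‖ := abs_real_inner_le_norm _ _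
    have h2 : |⟪w₀, xp⟫| ≤ ‖w₀‖ * ‖xp‖ := abs_real_inner_le_norm _ _
    have hw : ‖w₀‖ = s * ‖u‖ := by
      rw [hw0, norm_smul, Real.norm_eq_abs, abs_of_pos hs]
    have hb : |b₀| ≤ s * M := by
      rw [hb0, abs_neg, abs_div]
      rw [abs_of_pos (show (0:ℝ) < 2 by norm_num)]
      have := (abs_add_le ⟪w₀, xm⟫ ⟪w₀, xp⟫)
      rw [hM_def]
      rw [hw] at h1 h2
      rw [div_le_iff₀ (by norm_num : (0:ℝ) < 2)]
      nlinarith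
    have hsM : s * (M + 1) = lam := by
      rw [hs_def]; field_simp
    have : s * M < lam := by nlinarith
    linarith [hb]
  set V : Set (EuclideanSpace ℝ (Fin d) × ℝ) :=
    {p | ⟪p.1, xm⟫ < -p.2 ∧ -p.2 < ⟪p.1, xp⟫ ∧ |p.2| < lam} with hV_def
  have hc1 : Continuous fun p : EuclideanSpace ℝ (Fin d) × ℝ => ⟪p.1, xm⟫ :=
    continuous_fst.inner continuous_const
  have hc2 : Continuous fun p : EuclideanSpace ℝ (Fin d) × ℝ => ⟪p.1, xp⟫ :=
    continuous_fst.inner continuous_const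
  have hcb : Continuous fun p : EuclideanSpace ℝ (Fin d) × ℝ => -p.2 :=
    continuous_snd.neg
  have hV : IsOpen V := by
    refine ((isOpen_lt hc1 hcb).and ((isOpen_lt hcb hc2).and ?_))
    exact isOpen_lt (continuous_abs.comp continuous_snd) continuous_const
  have hmemV : (w₀, b₀) ∈ V := ⟨hlt1, hlt2, habs⟩
  obtain ⟨U, I, hU, hI, hwU, hbI, hsub⟩ := isOpen_prod_iff.mp hV w₀ b₀ hmemV
  have hVA : V ⊆ {p : EuclideanSpace ℝ (Fin d) × ℝ | ⟪p.1, xm⟫ ≤ -p.2 ∧ -p.2 < ⟪p.1, xp⟫} :=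
    fun p hp => ⟨hp.1.le, hp.2.1⟩
  calc (0 : ℝ≥0∞) < stdGaussian d U * unifIcc lam I :=
        ENNReal.mul_pos (hU.measure_pos _ ⟨w₀, hwU⟩).ne' (unifIcc_open_pos hlam hI hbI habs).ne'
    _ = ((stdGaussian d).prod (unifIcc lam)) (U ×ˢ I) := (Measure.prod_prod _ _).symm
    _ ≤ _ := measure_mono (hsub.trans hVA)

/-- almost-sure termination of the first loop: sampling i.i.d. random
hyperplanes, almost surely after finitely many draws every pair of oppositely labeled
points is separated by one of them. -/
theorem first_loop_terminates_as :
    ∃ C : ℝ, 0 < C ∧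
      ∀ (d : ℕ) (R lam : ℝ) (Xm Xp : Finset (EuclideanSpace ℝ (Fin d))),
        Xm.Nonempty → Xp.Nonempty → Disjoint Xm Xp →
        (∀ x ∈ Xm, ‖x‖ ≤ R) → (∀ x ∈ Xp, ‖x‖ ≤ R) →
        C * R ≤ lam →
        ∀ (Ω : Type) (_ : MeasurableSpace Ω) (P : Measure Ω), IsProbabilityMeasure P →
          ∀ (W : ℕ → Ω → EuclideanSpace ℝ (Fin d)) (B : ℕ → Ω → ℝ),
            iIndepFun (fun i ω => (W i ω, B i ω)) P →
            (∀ i, P.map (fun ω => (W i ω, B i ω)) = (stdGaussian d).prod (unifIcc lam)) →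
            ∀ᵐ ω ∂P, ∃ n : ℕ, ∀ xm ∈ Xm, ∀ xp ∈ Xp,
              ∃ i < n, ⟪W i ω, xm⟫ ≤ -(B i ω) ∧ -(B i ω) < ⟪W i ω, xp⟫ := by
  classical
  refine ⟨1, one_pos, ?_⟩
  intro d R lam Xm Xp hXm hXp hdisj hRm hRp hlam Ω mΩ P hP W B hindep hmap
  -- lam is positive
  obtain ⟨x₀, hx₀⟩ := hXm
  obtain ⟨y₀, hy₀⟩ := hXp
  have hxy₀ : x₀ ≠ y₀ := fun h => Finset.disjoint_left.mp hdisj hx₀ (h ▸ hy₀)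
  have hRpos : 0 < R := by
    by_contra h
    push_neg at h
    have h1 : x₀ = 0 := norm_le_zero_iff.mp ((hRm x₀ hx₀).trans h)
    have h2 : y₀ = 0 := norm_le_zero_iff.mp ((hRp y₀ hy₀).trans h)
    exact hxy₀ (h1.trans h2.symm)
  have hlam0 : 0 < lam := lt_of_lt_of_le (by linarith) hlam
  haveI := unifIcc_prob hlam0
  set f : ℕ → Ω → EuclideanSpace ℝ (Fin d) × ℝ := fun i ω => (W i ω, B i ω) with hf_def
  have hfae : ∀ i, AEMeasurable (f i) P := by
    intro i
    by_contra h
    have h0 : P.map (f i) = 0 := Measure.map_of_not_aemeasurable h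
    have h1 := hmap i
    rw [h0] at h1
    have : ((stdGaussian d).prod (unifIcc lam)) Set.univ = 1 := measure_univ
    rw [← h1] at this
    simp at this
  -- per pair a.s. statement
  have key : ∀ xm ∈ Xm, ∀ xp ∈ Xp, ∀ᵐ ω ∂P, ∃ i : ℕ,
      ⟪W i ω, xm⟫ ≤ -(B i ω) ∧ -(B i ω) < ⟪W i ω, xp⟫ := by
    intro xm hxm xp hxp
    have hne : xm ≠ xp := fun h => Finset.disjoint_left.mp hdisj hxm (h ▸ hxp)
    set A : Set (EuclideanSpace ℝ (Fin d) × ℝ) :=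
      {p | ⟪p.1, xm⟫ ≤ -p.2 ∧ -p.2 < ⟪p.1, xp⟫} with hA_def
    have hc1 : Continuous fun p : EuclideanSpace ℝ (Fin d) × ℝ => ⟪p.1, xm⟫ :=
      continuous_fst.inner continuous_const
    have hc2 : Continuous fun p : EuclideanSpace ℝ (Fin d) × ℝ => ⟪p.1, xp⟫ :=
      continuous_fst.inner continuous_const
    have hcb : Continuous fun p : EuclideanSpace ℝ (Fin d) × ℝ => -p.2 :=
      continuous_snd.neg
    have hA : MeasurableSet A :=
      (measurableSet_le hc1.measurable hcb.measurable).inter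
        (measurableSet_lt hcb.measurable hc2.measurable)
    have hp : 0 < ((stdGaussian d).prod (unifIcc lam)) A := sep_pos hlam0 xm xp hne
    set q : ℝ≥0∞ := ((stdGaussian d).prod (unifIcc lam)) Aᶜ with hq_def
    have hq : q < 1 := by
      have : q = 1 - ((stdGaussian d).prod (unifIcc lam)) A := by
        rw [hq_def, measure_compl hA (measure_ne_top _ _), measure_univ]
      rw [this]
      exact ENNReal.sub_lt_self ENNReal.one_ne_top one_ne_zero hp.ne'
    have hPS : ∀ i, P (f i ⁻¹' Aᶜ) = q := by
      intro i
      rw [← Measure.map_apply_of_aemeasurable (hfae i) hA.compl, hmap i]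
    have hInter : ∀ n, P (⋂ i ∈ Finset.range n, f i ⁻¹' Aᶜ) = q ^ n := by
      intro n
      rw [hindep.meas_biInter (fun i _ => ⟨Aᶜ, hA.compl, rfl⟩)]
      simp only [Set.preimage_compl] at hPS
      simp [hPS]
    have htail : P (⋂ i, f i ⁻¹' Aᶜ) = 0 := by
      have hle : ∀ n, P (⋂ i, f i ⁻¹' Aᶜ) ≤ q ^ n := by
        intro n
        rw [← hInter n]
        refine measure_mono fun x hx => ?_
        simp only [Set.mem_iInter] at hx ⊢
        exact fun i _ => hx i
      have htend := ENNReal.tendsto_pow_atTop_nhds_zero_of_lt_one hq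
      exact le_antisymm (ge_of_tendsto' htend hle) (by simp)
    have hset : {ω | ¬ ∃ i : ℕ, ⟪W i ω, xm⟫ ≤ -(B i ω) ∧ -(B i ω) < ⟪W i ω, xp⟫}
        = ⋂ i, f i ⁻¹' Aᶜ := by
      ext ω
      simp only [Set.mem_setOf_eq, not_exists, Set.mem_iInter, Set.mem_preimage,
        Set.mem_compl_iff, hA_def, hf_def, not_and, not_lt]
    rw [ae_iff, hset]
    exact htail
  have all : ∀ᵐ ω ∂P, ∀ xm ∈ Xm, ∀ xp ∈ Xp, ∃ i : ℕ,
      ⟪W i ω, xm⟫ ≤ -(B i ω) ∧ -(B i ω) < ⟪W i ω, xp⟫ :=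
    (ae_ball_iff Xm.countable_toSet).2 fun xm hxm =>
      (ae_ball_iff Xp.countable_toSet).2 fun xp hxp => key xm hxm xp hxp
  filter_upwards [all] with ω h
  choose! F hF using h
  refine ⟨(Xm.sup fun xm => Xp.sup fun xp => F xm xp) + 1, fun xm hxm xp hxp => ?_⟩
  refine ⟨F xm xp, ?_, hF xm hxm xp hxp⟩
  have h1 : F xm xp ≤ Xp.sup fun xp => F xm xp := Finset.le_sup hxp
  have h2 : (Xp.sup fun xp => F xm xp) ≤ Xm.sup fun xm => Xp.sup fun xp => F xm xp :=
    Finset.le_sup (f := fun xm => Xp.sup fun xp => F xm xp) hxm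
  omega
end

section
/- Let X⁺ ⊂ ℝ^d be a nonempty finite set and let x*⁻, x ∈ ℝ^d. For λ > 0, let (w_i, b_i), i ∈ ℕ, be i.i.d. with w_i ~ N(0, I_d) a standard Gaussian vector and b_i uniformly distributed on [−λ, λ], independent. For n ∈ ℕ let Φ^{(n)}: ℝ^d → ℝ^n be the threshold layer Φ^{(n)}_i(z) = Thres(⟨w_i, z⟩ + b_i), define u^{(n)} ∈ {0,1}^n by (u^{(n)})_i = 1 if Φ^{(n)}_i(x*⁻) = 0 and 0 otherwise, and m^{(n)} = min_{x⁺ ∈ X⁺} ⟨u^{(n)}, Φ^{(n)}(x⁺)⟩. (i) If ‖x − x*⁻‖₂ < dist(x*⁻, X⁺), then there exists Λ > 0 such that for every λ > Λ, almost surely there exists N ∈ ℕ with ⟨u^{(n)}, Φ^{(n)}(x)⟩ < m^{(n)} for all n > N. (ii) If ‖x − x*⁻‖₂ > dist(x*⁻, X⁺), then there exists Λ > 0 such that for every λ > Λ, almost surely there exists N ∈ ℕ with ⟨u^{(n)}, Φ^{(n)}(x)⟩ ≥ m^{(n)} for all n > N. -/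
open MeasureTheory ProbabilityTheory Real Filter
open scoped RealInnerProductSpace BigOperators ENNReal Topology

noncomputable def Thres (t : ℝ) : ℝ := if 0 < t then 1 else 0

namespace StmtAux

lemma map_withDensity_equiv {α β : Type*} [MeasurableSpace α] [MeasurableSpace β]
    (e : α ≃ᵐ β) (μ : Measure α) (g : α → ℝ≥0∞) (hg : Measurable g) :
    (μ.withDensity g).map e = (μ.map e).withDensity (g ∘ e.symm) := by
  ext s hs
  rw [e.map_apply, withDensity_apply _ (e.measurable hs), withDensity_apply _ hs,
    setLIntegral_map hs (hg.comp e.symm.measurable) e.measurable]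
  simp

lemma lintegral_pi_prod : ∀ (n : ℕ) (μ : Fin n → Measure ℝ), (∀ i, SigmaFinite (μ i)) →
    ∀ (g : Fin n → ℝ → ℝ≥0∞), (∀ i, Measurable (g i)) →
    ∫⁻ x, ∏ i, g i (x i) ∂(Measure.pi μ) = ∏ i, ∫⁻ t, g i t ∂(μ i) := by
  intro n
  induction n with
  | zero =>
      intro μ _ g _
      simp [lintegral_const, Measure.pi_empty_univ]
  | succ n ih =>
      intro μ hsf g hg
      haveI := hsf
      have hmp := (measurePreserving_piFinSuccAbove μ 0).symm
      rw [← hmp.lintegral_comp_emb (MeasurableEquiv.measurableEmbedding _)]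
      simp_rw [MeasurableEquiv.piFinSuccAbove_symm_apply, Fin.insertNthEquiv,
        Equiv.coe_fn_mk, Fin.insertNth_zero, Fin.prod_univ_succ, Fin.cons_zero, Fin.cons_succ]
      simp_rw [Fin.zero_succAbove, cast_eq]
      have h2 : Measurable fun y : Fin n → ℝ => ∏ i, g i.succ (y i) :=
        Finset.measurable_prod _ fun i _ => (hg i.succ).comp (measurable_pi_apply i)
      rw [lintegral_prod_mul (hg 0).aemeasurable h2.aemeasurable,
        ih (fun j => μ j.succ) (fun j => hsf j.succ) (fun j => g j.succ) (fun j => hg j.succ)]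
  


lemma pi_withDensity_gauss (n : ℕ) :
    (Measure.pi fun _ : Fin n => gaussianReal 0 1) =
      (Measure.pi fun _ : Fin n => (volume : Measure ℝ)).withDensity
        (fun x => ∏ i, gaussianPDF 0 1 (x i)) := by
  refine Measure.pi_eq (fun s hs => ?_)
  rw [withDensity_apply _ (MeasurableSet.univ_pi hs), ← lintegral_indicator
    (MeasurableSet.univ_pi hs) _]
  have hrw : (Set.univ.pi s).indicator (fun x => ∏ i, gaussianPDF 0 1 (x i)) =
      fun x => ∏ i, (s i).indicator (gaussianPDF 0 1) (x i) := by
    funext x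
    by_cases hx : x ∈ Set.univ.pi s
    · rw [Set.indicator_of_mem hx]
      exact Finset.prod_congr rfl fun i _ =>
        (Set.indicator_of_mem (hx i (Set.mem_univ i)) _).symm
    · rw [Set.indicator_of_notMem hx]
      obtain ⟨j, -, hj⟩ := Set.mem_univ_pi.not.mp hx |> not_forall.mp |>
        fun ⟨j, hj⟩ => (⟨j, trivial, hj⟩ : ∃ j, True ∧ x j ∉ s j)
      exact (Finset.prod_eq_zero (Finset.mem_univ j)
        (by rw [Set.indicator_of_notMem hj])).symm
  rw [hrw, lintegral_pi_prod n _ (fun _ => inferInstance) _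
    (fun i => (measurable_gaussianPDF 0 1).indicator (hs i))]
  exact Finset.prod_congr rfl fun i _ => by
    rw [lintegral_indicator (hs i) _, gaussianReal_apply 0 one_ne_zero]

lemma measurable_prod_pdf (n : ℕ) :
    Measurable (fun x : Fin n → ℝ => ∏ i, gaussianPDF 0 1 (x i)) :=
  Finset.measurable_prod _ fun i _ =>
    (measurable_gaussianPDF 0 1).comp (measurable_pi_apply i)

/-- the density is radial -/
lemma prod_pdf_radial {n : ℕ} (x : EuclideanSpace ℝ (Fin n)) :
    ∏ i, gaussianPDF 0 1 (x i) =
      ENNReal.ofReal ((Real.sqrt (2 * π))⁻¹ ^ n * Real.exp (-‖x‖ ^ 2 / 2)) := by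
  have h1 : ∀ t : ℝ, gaussianPDF 0 1 t
      = ENNReal.ofReal ((Real.sqrt (2 * π))⁻¹ * Real.exp (-t ^ 2 / 2)) := by
    intro t
    simp [gaussianPDF, gaussianPDFReal]
  simp_rw [h1]
  rw [← ENNReal.ofReal_prod_of_nonneg (fun i _ => by positivity)]
  congr 1
  rw [Finset.prod_mul_distrib, Finset.prod_const, ← Real.exp_sum]
  congr 2
  · simp
  have : ‖x‖ ^ 2 = ∑ i, x i ^ 2 := by
    rw [EuclideanSpace.norm_eq, Real.sq_sqrt (by positivity)]
    simp [sq_abs]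
  rw [this, ← Finset.sum_div, ← Finset.sum_neg_distrib]

lemma stdGaussian_map_measurableEquiv (d : ℕ) :
    (stdGaussian d).map ((MeasurableEquiv.toLp 2 (Fin d → ℝ)).symm) =
      Measure.pi fun _ : Fin d => gaussianReal 0 1 := by
  unfold _root_.stdGaussian
  rw [Measure.map_map (f := WithLp.toLp 2) (MeasurableEquiv.toLp 2 (Fin d → ℝ)).symm.measurable
    (MeasurableEquiv.toLp 2 (Fin d → ℝ)).measurable]
  exact Measure.map_id

lemma stdGaussian_eq_withDensity (d : ℕ) :
    stdGaussian d = (volume : Measure (EuclideanSpace ℝ (Fin d))).withDensity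
      (fun x => ENNReal.ofReal ((Real.sqrt (2 * π))⁻¹ ^ d * Real.exp (-‖x‖ ^ 2 / 2))) := by
  set e := (MeasurableEquiv.toLp 2 (Fin d → ℝ)).symm with he
  have h1 : stdGaussian d =
      ((Measure.pi fun _ : Fin d => gaussianReal 0 1).map e.symm) := by
    rw [← stdGaussian_map_measurableEquiv d, MeasurableEquiv.map_symm_map]
  rw [h1, pi_withDensity_gauss, map_withDensity_equiv e.symm _ _ (measurable_prod_pdf d),
    show (Measure.pi fun _ : Fin d => (volume : Measure ℝ)) = (volume : Measure (Fin d → ℝ))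
      from volume_pi.symm,
    ((EuclideanSpace.volume_preserving_symm_measurableEquiv_toLp (Fin d)).symm (MeasurableEquiv.toLp 2 (Fin d → ℝ)).symm).map_eq]
  congr 1
  funext x
  have : ∀ i, (e.symm.symm x) i = x i := fun i => rfl
  simp only [Function.comp_apply, this]
  exact prod_pdf_radial x


lemma stdGaussian_map_repr {d : ℕ}
    (b : OrthonormalBasis (Fin d) ℝ (EuclideanSpace ℝ (Fin d))) :
    (stdGaussian d).map b.repr = stdGaussian d := by
  set eb := b.repr.toHomeomorph.toMeasurableEquiv with heb
  have hco : ⇑eb = ⇑b.repr := rfl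
  have hmeas : Measurable (fun x : EuclideanSpace ℝ (Fin d) =>
      ENNReal.ofReal ((Real.sqrt (2 * π))⁻¹ ^ d * Real.exp (-‖x‖ ^ 2 / 2))) := by
    refine Measurable.ennreal_ofReal (Continuous.measurable ?_)
    continuity
  rw [stdGaussian_eq_withDensity, ← hco, map_withDensity_equiv eb _ _ hmeas, hco,
    b.measurePreserving_repr.map_eq]
  congr 1
  funext x
  have h1 : eb.symm x = b.repr.symm x := rfl
  simp only [Function.comp_apply, h1, LinearIsometryEquiv.norm_map]

lemma pi_map_eval {d : ℕ} (i : Fin d) :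
    (Measure.pi fun _ : Fin d => gaussianReal 0 1).map (fun x => x i) = gaussianReal 0 1 := by
  ext s hs
  rw [Measure.map_apply (measurable_pi_apply i) hs]
  have : (fun x : Fin d → ℝ => x i) ⁻¹' s =
      Set.univ.pi (Function.update (fun _ : Fin d => (Set.univ : Set ℝ)) i s) := by
    ext x
    constructor
    · intro hx j _
      rcases eq_or_ne j i with rfl | hj
      · simpa [Function.update] using hx
      · simp [Function.update, hj]
    · intro hx
      have := hx i (Set.mem_univ i)
      simpa [Function.update] using this
  rw [this, Measure.pi_pi]
  rw [Finset.prod_eq_single i (fun j _ hj => by simp [Function.update, hj]) (by simp)]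
  simp [Function.update]

lemma isProbabilityMeasure_stdGaussian (d : ℕ) : IsProbabilityMeasure (stdGaussian d) := by
  constructor
  haveI : IsProbabilityMeasure
      ((Measure.pi fun _ : Fin d => gaussianReal 0 1 : Measure (Fin d → ℝ))) := inferInstance
  have h := congrArg (fun m : Measure (Fin d → ℝ) => m Set.univ)
    (stdGaussian_map_measurableEquiv d)
  simpa [Measure.map_apply ((MeasurableEquiv.toLp 2 (Fin d → ℝ)).symm).measurable
    MeasurableSet.univ] using h

lemma stdGaussian_map_inner {d : ℕ} (v : EuclideanSpace ℝ (Fin d)) :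
    (stdGaussian d).map (fun w => ⟪w, v⟫) = (gaussianReal 0 1).map (fun t => ‖v‖ * t) := by
  rcases eq_or_ne v 0 with rfl | hv
  · have : (fun w : EuclideanSpace ℝ (Fin d) => ⟪w, (0 : EuclideanSpace ℝ (Fin d))⟫)
        = fun _ => (0 : ℝ) := by funext w; simp
    rw [this]
    have : (fun t : ℝ => ‖(0 : EuclideanSpace ℝ (Fin d))‖ * t) = fun _ => (0 : ℝ) := by
      funext t; simp
    rw [this]
    haveI : IsProbabilityMeasure (stdGaussian d) := isProbabilityMeasure_stdGaussian d
    simp [Measure.map_const]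
  · have hd : 0 < d := by
      rcases Nat.eq_zero_or_pos d with rfl | h
      · exact absurd (Subsingleton.elim v 0) hv
      · exact h
    set i₀ : Fin d := ⟨0, hd⟩
    set u : EuclideanSpace ℝ (Fin d) := ‖v‖⁻¹ • v with hu_def
    have hu : ‖u‖ = 1 := norm_smul_inv_norm hv
    have horth : Orthonormal ℝ (({i₀} : Set (Fin d)).restrict (fun _ => u)) := by
      constructor
      · intro j
        exact hu
      · intro j k hjk
        exfalso
        exact hjk (Subsingleton.elim j k)
    obtain ⟨b, hb⟩ := Orthonormal.exists_orthonormalBasis_extension_of_card_eq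
      (by simp) horth
    have hbu : b i₀ = u := hb i₀ rfl
    have hrw : (fun w : EuclideanSpace ℝ (Fin d) => ⟪w, v⟫) =
        ((fun t : ℝ => ‖v‖ * t) ∘ (fun y : EuclideanSpace ℝ (Fin d) => y i₀)) ∘ ⇑b.repr := by
      funext w
      have h1 : (b.repr w) i₀ = ⟪b i₀, w⟫ := b.repr_apply_apply w i₀
      have h2 : v = ‖v‖ • u := by
        rw [hu_def, smul_smul, mul_inv_cancel₀ (norm_ne_zero_iff.mpr hv), one_smul]
      have h3 : ⟪w, v⟫ = ‖v‖ * ⟪u, w⟫ := by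
        calc ⟪w, v⟫ = ⟪v, w⟫ := real_inner_comm _ _
        _ = ⟪(‖v‖ • u : EuclideanSpace ℝ (Fin d)), w⟫ := by conv_lhs => rw [h2]
        _ = ‖v‖ * ⟪u, w⟫ := real_inner_smul_left _ _ _
      simp only [Function.comp_apply, h1, hbu, h3]
  -- chain of maps
    have hev : Measurable fun y : EuclideanSpace ℝ (Fin d) => y i₀ := by
      exact (measurable_pi_apply i₀).comp (MeasurableEquiv.toLp 2 (Fin d → ℝ)).symm.measurable
    rw [hrw, ← Measure.map_map ((measurable_const_mul _).comp hev)
      (LinearIsometryEquiv.continuous b.repr).measurable,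
      stdGaussian_map_repr b,
      ← Measure.map_map (measurable_const_mul ‖v‖) hev]
    congr 1
    have : (stdGaussian d).map (fun y : EuclideanSpace ℝ (Fin d) => y i₀) =
        ((stdGaussian d).map ((MeasurableEquiv.toLp 2 (Fin d → ℝ)).symm)).map
          (fun x : Fin d → ℝ => x i₀) := by
      rw [Measure.map_map (measurable_pi_apply i₀) (MeasurableEquiv.toLp 2 (Fin d → ℝ)).symm.measurable]
      rfl
    rw [this, stdGaussian_map_measurableEquiv, pi_map_eval]


lemma gaussian_eq_withDensity : gaussianReal 0 1 = volume.withDensity (gaussianPDF 0 1) :=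
  gaussianReal_of_var_ne_zero 0 one_ne_zero

lemma integrable_id_gaussian : Integrable (fun t : ℝ => t) (gaussianReal 0 1) := by
  rw [gaussian_eq_withDensity, integrable_withDensity_iff (measurable_gaussianPDF 0 1)
    (ae_of_all _ fun x => ENNReal.ofReal_lt_top)]
  have : (fun x : ℝ => x * (gaussianPDF 0 1 x).toReal) =
      fun x => (Real.sqrt (2 * π))⁻¹ * (x * Real.exp (-(1/2) * x ^ 2)) := by
    funext x
    rw [gaussianPDF, ENNReal.toReal_ofReal (gaussianPDFReal_nonneg 0 1 x), gaussianPDFReal]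
    push_cast
    ring_nf
  rw [this]
  exact (integrable_mul_exp_neg_mul_sq (by norm_num : (0:ℝ) < 1/2)).const_mul _

noncomputable def Kg : ℝ := ∫ t, max t 0 ∂(gaussianReal 0 1)

lemma integrable_max_id_gaussian : Integrable (fun t : ℝ => max t 0) (gaussianReal 0 1) := by
  refine integrable_id_gaussian.mono ?_ (ae_of_all _ fun t => ?_)
  · exact (continuous_id.max continuous_const).aestronglyMeasurable
  · simp only [Real.norm_eq_abs]
    rcases le_total t 0 with h | h
    · rw [max_eq_right h]; simp [abs_nonneg]
    · rw [max_eq_left h]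

lemma Kg_pos : 0 < Kg := by
  rw [Kg, integral_pos_iff_support_of_nonneg_ae (ae_of_all _ fun t => le_max_right t 0)
    integrable_max_id_gaussian]
  have hsupp : (Function.support fun t : ℝ => max t 0) = Set.Ioi 0 := by
    ext t
    simp only [Function.mem_support, Set.mem_Ioi]
    constructor
    · intro h
      by_contra hle
      push_neg at hle
      exact h (max_eq_right hle)
    · intro h
      rw [max_eq_left h.le]
      exact ne_of_gt h
  rw [hsupp]
  rw [gaussian_eq_withDensity, withDensity_apply _ measurableSet_Ioi]
  by_contra hz
  push_neg at hz
  have h0 : ∫⁻ x in Set.Ioi (0:ℝ), gaussianPDF 0 1 x ∂volume = 0 := le_antisymm (by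
    exact le_of_not_gt (by simpa using hz)) (zero_le)
  rw [lintegral_eq_zero_iff (measurable_gaussianPDF 0 1)] at h0
  have hne : (volume.restrict (Set.Ioi (0:ℝ))) ≠ 0 := by
    simp [Measure.restrict_eq_zero]
  haveI : (ae (volume.restrict (Set.Ioi (0:ℝ)))).NeBot := ae_neBot.mpr hne
  obtain ⟨t, ht⟩ := h0.exists
  exact absurd ht (ne_of_gt (gaussianPDF_pos 0 one_ne_zero t))

variable {d : ℕ}

lemma measurable_inner_right (v : EuclideanSpace ℝ (Fin d)) :
    Measurable (fun w : EuclideanSpace ℝ (Fin d) => ⟪w, v⟫) :=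
  (continuous_id.inner continuous_const).measurable

lemma integrable_inner_gaussian (v : EuclideanSpace ℝ (Fin d)) :
    Integrable (fun w : EuclideanSpace ℝ (Fin d) => ⟪w, v⟫) (stdGaussian d) := by
  have h := stdGaussian_map_inner v
  have hid1 : AEStronglyMeasurable (fun t : ℝ => t)
      ((gaussianReal 0 1).map (fun t => ‖v‖ * t)) := aestronglyMeasurable_id
  have hid2 : AEStronglyMeasurable (fun t : ℝ => t)
      ((stdGaussian d).map (fun w => ⟪w, v⟫)) := aestronglyMeasurable_id
  have : Integrable (fun t : ℝ => t) ((stdGaussian d).map (fun w => ⟪w, v⟫)) := by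
    rw [h]
    rw [integrable_map_measure hid1 (measurable_const_mul ‖v‖).aemeasurable]
    exact (integrable_id_gaussian.const_mul ‖v‖).congr (ae_of_all _ fun t => rfl)
  rw [integrable_map_measure hid2 (measurable_inner_right v).aemeasurable] at this
  exact this.congr (ae_of_all _ fun t => rfl)

lemma integral_max_inner (v : EuclideanSpace ℝ (Fin d)) :
    ∫ w, max ⟪w, v⟫ 0 ∂(stdGaussian d) = ‖v‖ * Kg := by
  have hmax : AEStronglyMeasurable (fun t : ℝ => max t 0)
      ((stdGaussian d).map (fun w => ⟪w, v⟫)) :=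
    (continuous_id.max continuous_const).aestronglyMeasurable
  have hmax2 : AEStronglyMeasurable (fun t : ℝ => max t 0)
      ((gaussianReal 0 1).map (fun t => ‖v‖ * t)) :=
    (continuous_id.max continuous_const).aestronglyMeasurable
  rw [← integral_map (measurable_inner_right v).aemeasurable hmax, stdGaussian_map_inner v,
    integral_map (measurable_const_mul ‖v‖).aemeasurable hmax2]
  have : ∫ t, max (‖v‖ * t) 0 ∂(gaussianReal 0 1) = ∫ t, ‖v‖ * max t 0 ∂(gaussianReal 0 1) :=
    integral_congr_ae (ae_of_all _ fun t => by
      have := mul_max_of_nonneg t 0 (norm_nonneg v)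
      simpa using this.symm)
  rw [this, integral_const_mul]
  rfl

lemma integrable_tail (z : EuclideanSpace ℝ (Fin d)) (l : ℝ) :
    Integrable (fun w : EuclideanSpace ℝ (Fin d) => max (|⟪w, z⟫| - l) 0) (stdGaussian d) := by
  haveI := isProbabilityMeasure_stdGaussian d
  refine Integrable.mono ((integrable_inner_gaussian z).abs.add (integrable_const |l|)) ?_
    (ae_of_all _ fun w => ?_)
  · exact ((((continuous_id.inner continuous_const).abs.sub continuous_const).max
      continuous_const)).aestronglyMeasurable
  · simp only [Real.norm_eq_abs, Pi.add_apply]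
    rw [abs_of_nonneg (le_max_right _ 0)]
    rcases le_total (|⟪w, z⟫| - l) 0 with h | h
    · rw [max_eq_right h]
      positivity
    · rw [max_eq_left h, abs_of_nonneg (by positivity : (0:ℝ) ≤ |⟪w, z⟫| + |l|)]
      have := neg_abs_le l
      linarith [abs_nonneg (⟪w, z⟫)]

lemma tendsto_tail (z : EuclideanSpace ℝ (Fin d)) :
    Tendsto (fun l : ℝ => ∫ w, max (|⟪w, z⟫| - l) 0 ∂(stdGaussian d)) atTop (𝓝 0) := by
  haveI := isProbabilityMeasure_stdGaussian d
  have h : Tendsto (fun l : ℝ => ∫ w, max (|⟪w, z⟫| - l) 0 ∂(stdGaussian d)) atTop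
      (𝓝 (∫ _w : EuclideanSpace ℝ (Fin d), (0:ℝ) ∂(stdGaussian d))) := by
    refine tendsto_integral_filter_of_dominated_convergence
      (fun w => |⟪w, z⟫|) ?_ ?_ (integrable_inner_gaussian z).abs ?_
    · exact Eventually.of_forall fun l =>
        ((((continuous_id.inner continuous_const).abs.sub continuous_const).max
          continuous_const)).aestronglyMeasurable
    · filter_upwards [eventually_ge_atTop (0:ℝ)] with l hl0
      refine ae_of_all _ fun w => ?_
      simp only [Real.norm_eq_abs]
      rw [abs_of_nonneg (le_max_right _ 0)]
      rcases le_total (|⟪w, z⟫| - l) 0 with h | h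
      · rw [max_eq_right h]; positivity
      · rw [max_eq_left h]
        linarith [abs_nonneg (⟪w, z⟫)]
    · refine ae_of_all _ fun w => ?_
      have hev : ∀ᶠ l : ℝ in atTop, max (|⟪w, z⟫| - l) 0 = 0 := by
        filter_upwards [eventually_ge_atTop (|⟪w, z⟫|)] with l hl
        exact max_eq_right (by linarith)
      exact Tendsto.congr' (hev.mono fun l hl => hl.symm) tendsto_const_nhds
  simpa using h


section Pcomp

variable {d : ℕ}

lemma unifIcc_isProb {lam : ℝ} (hl : 0 < lam) : IsProbabilityMeasure (unifIcc lam) := by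
  constructor
  rw [unifIcc, Measure.smul_apply, Measure.restrict_apply MeasurableSet.univ]
  rw [Set.univ_inter, Real.volume_Icc, smul_eq_mul]
  rw [show lam - -lam = 2 * lam by ring]
  exact ENNReal.inv_mul_cancel (by simp [hl]) ENNReal.ofReal_ne_top

lemma unifIcc_Ioc {lam : ℝ} (hl : 0 < lam) (u t : ℝ) :
    unifIcc lam (Set.Ioc u t) =
      (ENNReal.ofReal (2 * lam))⁻¹ * ENNReal.ofReal (min t lam - max u (-lam)) := by
  rw [unifIcc, Measure.smul_apply, Measure.restrict_apply measurableSet_Ioc, smul_eq_mul]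
  congr 1
  have hsub1 : Set.Ioc (max u (-lam)) (min t lam) ⊆ Set.Ioc u t ∩ Set.Icc (-lam) lam := by
    intro r hr
    rcases hr with ⟨h1, h2⟩
    constructor
    · exact ⟨lt_of_le_of_lt (le_max_left u (-lam)) h1, h2.trans (min_le_left t lam)⟩
    · exact ⟨(le_max_right u (-lam)).trans h1.le, h2.trans (min_le_right t lam)⟩
  have hsub2 : Set.Ioc u t ∩ Set.Icc (-lam) lam ⊆
      Set.Ioc (max u (-lam)) (min t lam) ∪ {-lam} := by
    intro r hr
    rcases hr with ⟨⟨h1, h2⟩, ⟨h3, h4⟩⟩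
    rcases eq_or_lt_of_le h3 with he | hlt
    · exact Or.inr (by simp [he.symm])
    · exact Or.inl ⟨max_lt h1 hlt, le_min h2 h4⟩
  refine le_antisymm ?_ ?_
  · refine le_trans (measure_mono hsub2) ?_
    refine le_trans (measure_union_le _ _) ?_
    simp [Real.volume_Ioc]
  · refine le_trans ?_ (measure_mono hsub1)
    simp [Real.volume_Ioc]

/-- the effective (truncated) interval length -/
noncomputable def plen (xs z : EuclideanSpace ℝ (Fin d)) (lam : ℝ)
    (w : EuclideanSpace ℝ (Fin d)) : ℝ :=
  max (min (-⟪w, xs⟫) lam + min (⟪w, z⟫) lam) 0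

lemma continuous_plen (xs z : EuclideanSpace ℝ (Fin d)) (lam : ℝ) :
    Continuous (plen xs z lam) := by
  unfold plen
  exact ((((continuous_id.inner (continuous_const : Continuous fun _ => xs)).neg.min
    continuous_const).add ((continuous_id.inner
      (continuous_const : Continuous fun _ => z)).min continuous_const)).max
    continuous_const)

lemma plen_nonneg (xs z : EuclideanSpace ℝ (Fin d)) (lam : ℝ) (w : EuclideanSpace ℝ (Fin d)) :
    0 ≤ plen xs z lam w := le_max_right _ _

lemma integrable_plen (xs z : EuclideanSpace ℝ (Fin d)) {lam : ℝ} (hl : 0 < lam) :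
    Integrable (plen xs z lam) (stdGaussian d) := by
  haveI := isProbabilityMeasure_stdGaussian d
  refine Integrable.mono (integrable_const (2 * lam)) 
    (continuous_plen xs z lam).aestronglyMeasurable (ae_of_all _ fun w => ?_)
  rw [Real.norm_eq_abs, abs_of_nonneg (plen_nonneg xs z lam w), Real.norm_eq_abs,
    abs_of_nonneg (by positivity : (0:ℝ) ≤ 2 * lam)]
  unfold plen
  rcases le_total (min (-⟪w, xs⟫) lam + min (⟪w, z⟫) lam) 0 with h | h
  · rw [max_eq_right h]; positivity
  · rw [max_eq_left h]
    have h1 : min (-⟪w, xs⟫) lam ≤ lam := min_le_right _ _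
    have h2 : min (⟪w, z⟫) lam ≤ lam := min_le_right _ _
    linarith

noncomputable def Aset (xs z : EuclideanSpace ℝ (Fin d)) : Set (EuclideanSpace ℝ (Fin d) × ℝ) :=
  {p | ⟪p.1, xs⟫ + p.2 ≤ 0 ∧ 0 < ⟪p.1, z⟫ + p.2}

lemma measurableSet_Aset (xs z : EuclideanSpace ℝ (Fin d)) : MeasurableSet (Aset xs z) := by
  have h1 : Continuous (fun p : EuclideanSpace ℝ (Fin d) × ℝ => ⟪p.1, xs⟫ + p.2) :=
    (continuous_fst.inner continuous_const).add continuous_snd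
  have h2 : Continuous (fun p : EuclideanSpace ℝ (Fin d) × ℝ => ⟪p.1, z⟫ + p.2) :=
    (continuous_fst.inner continuous_const).add continuous_snd
  exact (measurableSet_le h1.measurable measurable_const).inter
    (measurableSet_lt measurable_const h2.measurable)

lemma prod_Aset (xs z : EuclideanSpace ℝ (Fin d)) {lam : ℝ} (hl : 0 < lam) :
    ((stdGaussian d).prod (unifIcc lam)) (Aset xs z) =
      (ENNReal.ofReal (2 * lam))⁻¹ *
        ENNReal.ofReal (∫ w, plen xs z lam w ∂(stdGaussian d)) := by
  haveI := unifIcc_isProb hl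
  haveI := isProbabilityMeasure_stdGaussian d
  rw [Measure.prod_apply (measurableSet_Aset xs z)]
  have hslice : ∀ w : EuclideanSpace ℝ (Fin d),
      (Prod.mk w ⁻¹' (Aset xs z)) = Set.Ioc (-⟪w, z⟫) (-⟪w, xs⟫) := by
    intro w
    ext b
    simp only [Aset, Set.mem_preimage, Set.mem_setOf_eq, Set.mem_Ioc]
    constructor
    · rintro ⟨h1, h2⟩; constructor <;> linarith
    · rintro ⟨h1, h2⟩; constructor <;> linarith
  have hrw : ∀ w : EuclideanSpace ℝ (Fin d),
      unifIcc lam (Prod.mk w ⁻¹' (Aset xs z)) =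
        (ENNReal.ofReal (2 * lam))⁻¹ * ENNReal.ofReal (plen xs z lam w) := by
    intro w
    rw [hslice w, unifIcc_Ioc hl]
    congr 1
    rw [max_neg_neg]
    have harg : min (-⟪w, xs⟫) lam - -min (⟪w, z⟫) lam
        = min (-⟪w, xs⟫) lam + min (⟪w, z⟫) lam := by ring
    rw [harg]
    unfold plen
    rcases le_total (min (-⟪w, xs⟫) lam + min (⟪w, z⟫) lam) 0 with h | h
    · rw [max_eq_right h, ENNReal.ofReal_of_nonpos h, ENNReal.ofReal_zero]
    · rw [max_eq_left h]
  rw [lintegral_congr hrw, lintegral_const_mul _ (by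
    exact (ENNReal.measurable_ofReal.comp (continuous_plen xs z lam).measurable))]
  congr 1
  rw [← ofReal_integral_eq_lintegral_ofReal (integrable_plen xs z hl)
    (ae_of_all _ (plen_nonneg xs z lam))]

lemma integrable_max_inner (v : EuclideanSpace ℝ (Fin d)) :
    Integrable (fun w : EuclideanSpace ℝ (Fin d) => max ⟪w, v⟫ 0) (stdGaussian d) := by
  refine (integrable_inner_gaussian v).mono
    (((continuous_id.inner continuous_const).max continuous_const).aestronglyMeasurable)
    (ae_of_all _ fun w => ?_)
  simp only [Real.norm_eq_abs]
  rcases le_total (⟪w, v⟫ : ℝ) 0 with h | h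
  · rw [max_eq_right h]; simp [abs_nonneg]
  · rw [max_eq_left h]

lemma plen_le (xs z : EuclideanSpace ℝ (Fin d)) (lam : ℝ) (w : EuclideanSpace ℝ (Fin d)) :
    plen xs z lam w ≤ max ⟪w, z - xs⟫ 0 := by
  rw [inner_sub_right]
  unfold plen
  have h1 : min (-⟪w, xs⟫) lam ≤ -⟪w, xs⟫ := min_le_left _ _
  have h2 : min (⟪w, z⟫) lam ≤ ⟪w, z⟫ := min_le_left _ _
  rcases le_total (min (-⟪w, xs⟫) lam + min (⟪w, z⟫) lam) 0 with h | h
  · rw [max_eq_right h]; exact le_max_right _ _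
  · rw [max_eq_left h]
    exact le_max_of_le_left (by linarith)

lemma plen_ge (xs z : EuclideanSpace ℝ (Fin d)) (lam : ℝ) (w : EuclideanSpace ℝ (Fin d)) :
    max ⟪w, z - xs⟫ 0 - max (|⟪w, xs⟫| - lam) 0 - max (|⟪w, z⟫| - lam) 0
      ≤ plen xs z lam w := by
  rw [inner_sub_right]
  unfold plen
  set a := ⟪w, xs⟫
  set c := ⟪w, z⟫
  have h1 : -a - max (|a| - lam) 0 ≤ min (-a) lam := by
    rcases le_total (-a) lam with h | h
    · rw [min_eq_left h]
      have := le_max_right (|a| - lam) 0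
      linarith
    · rw [min_eq_right h]
      have h2 : -a - lam ≤ |a| - lam := by
        have := neg_le_abs a
        linarith
      have := le_max_left (|a| - lam) 0
      linarith
  have h2 : c - max (|c| - lam) 0 ≤ min c lam := by
    rcases le_total c lam with h | h
    · rw [min_eq_left h]
      have := le_max_right (|c| - lam) 0
      linarith
    · rw [min_eq_right h]
      have h3 : c - lam ≤ |c| - lam := by
        have := le_abs_self c
        linarith
    
      have := le_max_left (|c| - lam) 0
      linarith
  have hD1 : 0 ≤ max (|a| - lam) 0 := le_max_right _ _
  have hD2 : 0 ≤ max (|c| - lam) 0 := le_max_right _ _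
  rcases le_total (c - a) 0 with h | h
  · rw [max_eq_right h]
    have := le_max_right (min (-a) lam + min c lam) 0
    linarith
  · rw [max_eq_left h]
    have := le_max_left (min (-a) lam + min c lam) 0
    linarith

lemma integral_plen_le (xs z : EuclideanSpace ℝ (Fin d)) {lam : ℝ} (hl : 0 < lam) :
    ∫ w, plen xs z lam w ∂(stdGaussian d) ≤ ‖z - xs‖ * Kg := by
  rw [← integral_max_inner (z - xs)]
  refine integral_mono (integrable_plen xs z hl) ?_ (plen_le xs z lam)
  exact integrable_max_inner (z - xs)

lemma integral_plen_ge (xs z : EuclideanSpace ℝ (Fin d)) {lam : ℝ} (hl : 0 < lam) :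
    ‖z - xs‖ * Kg - (∫ w, max (|⟪w, xs⟫| - lam) 0 ∂(stdGaussian d))
        - (∫ w, max (|⟪w, z⟫| - lam) 0 ∂(stdGaussian d))
      ≤ ∫ w, plen xs z lam w ∂(stdGaussian d) := by
  have hpt : ∀ w : EuclideanSpace ℝ (Fin d), max ⟪w, z - xs⟫ 0 ≤
      plen xs z lam w + (max (|⟪w, xs⟫| - lam) 0 + max (|⟪w, z⟫| - lam) 0) := by
    intro w
    have := plen_ge xs z lam w
    linarith
  have hadd : Integrable (fun w : EuclideanSpace ℝ (Fin d) =>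
      max (|⟪w, xs⟫| - lam) 0 + max (|⟪w, z⟫| - lam) 0) (stdGaussian d) :=
    (integrable_tail xs lam).add (integrable_tail z lam)
  have hmono := integral_mono (integrable_max_inner (z - xs))
    ((integrable_plen xs z hl).add hadd) hpt
  simp only [Pi.add_apply] at hmono
  rw [integral_add (integrable_plen xs z hl) hadd,
    integral_add (integrable_tail xs lam) (integrable_tail z lam),
    integral_max_inner (z - xs)] at hmono
  linarith

lemma exists_Lam (xs x y : EuclideanSpace ℝ (Fin d)) (hxy : ‖x - xs‖ < ‖y - xs‖) :
    ∃ Λ : ℝ, 0 < Λ ∧ ∀ lam : ℝ, Λ < lam →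
      ((stdGaussian d).prod (unifIcc lam)) (Aset xs x) <
        ((stdGaussian d).prod (unifIcc lam)) (Aset xs y) := by
  have hK := Kg_pos
  have hgap : 0 < (‖y - xs‖ - ‖x - xs‖) * Kg := by
    have : 0 < ‖y - xs‖ - ‖x - xs‖ := by linarith
    positivity
  have htend : Tendsto (fun l : ℝ => (∫ w, max (|⟪w, xs⟫| - l) 0 ∂(stdGaussian d))
      + ∫ w, max (|⟪w, y⟫| - l) 0 ∂(stdGaussian d)) atTop (𝓝 0) := by
    simpa using (tendsto_tail (d := d) xs).add (tendsto_tail (d := d) y)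
  have hev := (htend.eventually_lt_const hgap)
  obtain ⟨Λ₀, hΛ₀⟩ := hev.exists_forall_of_atTop
  refine ⟨max Λ₀ 1, lt_max_of_lt_right one_pos, fun lam hlam => ?_⟩
  have hl : 0 < lam := lt_of_lt_of_le one_pos (le_of_lt (lt_of_le_of_lt (le_max_right Λ₀ 1) hlam))
  have hlam0 : Λ₀ ≤ lam := le_of_lt (lt_of_le_of_lt (le_max_left Λ₀ 1) hlam)
  have hint : ∫ w, plen xs x lam w ∂(stdGaussian d) < ∫ w, plen xs y lam w ∂(stdGaussian d) := by
    have h1 := integral_plen_le xs x hl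
    have h2 := integral_plen_ge xs y hl
    have h3 := hΛ₀ lam hlam0
    linarith
  rw [prod_Aset xs x hl, prod_Aset xs y hl]
  have hne : (ENNReal.ofReal (2 * lam))⁻¹ ≠ 0 := by
    exact ENNReal.inv_ne_zero.mpr ENNReal.ofReal_ne_top
  have hnetop : (ENNReal.ofReal (2 * lam))⁻¹ ≠ ⊤ := by
    simp [ENNReal.inv_ne_top, hl]
  rw [ENNReal.mul_lt_mul_iff_right hne hnetop]
  exact (ENNReal.ofReal_lt_ofReal_iff_of_nonneg
    (integral_nonneg (plen_nonneg xs x lam))).mpr hint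

end Pcomp

section SLLN

variable {d : ℕ}

lemma Ffun_eq_indicator (xs z : EuclideanSpace ℝ (Fin d)) :
    (fun p : EuclideanSpace ℝ (Fin d) × ℝ =>
        (if Thres (⟪p.1, xs⟫ + p.2) = 0 then (1 : ℝ) else 0) * Thres (⟪p.1, z⟫ + p.2))
      = (Aset xs z).indicator (1 : EuclideanSpace ℝ (Fin d) × ℝ → ℝ) := by
  funext p
  rcases lt_or_ge 0 (⟪p.1, xs⟫ + p.2) with h1 | h1
  · have hmem : p ∉ Aset xs z := fun h => absurd h.1 (not_le.mpr h1)
    rw [Set.indicator_of_notMem hmem]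
    have hth : Thres (⟪p.1, xs⟫ + p.2) = 1 := if_pos h1
    rw [hth]
    norm_num
  · have hth1 : Thres (⟪p.1, xs⟫ + p.2) = 0 := if_neg (not_lt.mpr h1)
    rw [hth1, if_pos rfl, one_mul]
    rcases lt_or_ge 0 (⟪p.1, z⟫ + p.2) with h2 | h2
    · have hmem : p ∈ Aset xs z := ⟨h1, h2⟩
      rw [Set.indicator_of_mem hmem, Pi.one_apply]
      exact if_pos h2
    · have hmem : p ∉ Aset xs z := fun h => absurd h.2 (not_lt.mpr h2)
      rw [Set.indicator_of_notMem hmem]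
      exact if_neg (not_lt.mpr h2)

lemma slln_Ffun (xs z : EuclideanSpace ℝ (Fin d)) {lam : ℝ} (hl : 0 < lam)
    {Ω : Type} [MeasurableSpace Ω] (P : Measure Ω) [IsProbabilityMeasure P]
    (W : ℕ → Ω → EuclideanSpace ℝ (Fin d)) (B : ℕ → Ω → ℝ)
    (hind : iIndepFun (fun i ω => (W i ω, B i ω)) P)
    (hmap : ∀ i, P.map (fun ω => (W i ω, B i ω)) = (stdGaussian d).prod (unifIcc lam)) :
    ∀ᵐ ω ∂P, Tendsto (fun n : ℕ => (∑ i ∈ Finset.range n,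
        (if Thres (⟪W i ω, xs⟫ + B i ω) = 0 then (1 : ℝ) else 0) *
          Thres (⟪W i ω, z⟫ + B i ω)) / n) atTop
      (𝓝 ((((stdGaussian d).prod (unifIcc lam)) (Aset xs z)).toReal)) := by
  haveI := isProbabilityMeasure_stdGaussian d
  haveI := unifIcc_isProb hl
  haveI : IsProbabilityMeasure ((stdGaussian d).prod (unifIcc lam)) := by infer_instance
  set μ := (stdGaussian d).prod (unifIcc lam) with hμ
  set F : EuclideanSpace ℝ (Fin d) × ℝ → ℝ :=
    (Aset xs z).indicator (1 : EuclideanSpace ℝ (Fin d) × ℝ → ℝ) with hF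
  have hFmeas : Measurable F :=
    (measurable_const).indicator (measurableSet_Aset xs z)
  have hFbd : ∀ p, ‖F p‖ ≤ 1 := by
    intro p
    rw [hF]
    by_cases hp : p ∈ Aset xs z <;> simp [Set.indicator, hp]
  have hpair : ∀ i, AEMeasurable (fun ω => (W i ω, B i ω)) P := by
    intro i
    by_contra hc
    have h0 := Measure.map_of_not_aemeasurable hc
    rw [hmap i] at h0
    have := congrArg (fun m : Measure (EuclideanSpace ℝ (Fin d) × ℝ) => m Set.univ) h0
    simp [measure_univ] at this
  set X : ℕ → Ω → ℝ := fun i ω => F (W i ω, B i ω) with hX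
  have hXmeas : ∀ i, AEStronglyMeasurable (X i) P :=
    fun i => (hFmeas.comp_aemeasurable (hpair i)).aestronglyMeasurable
  have hident : ∀ i, IdentDistrib (X i) (X 0) P P := by
    intro i
    refine ⟨(hFmeas.comp_aemeasurable (hpair i)), (hFmeas.comp_aemeasurable (hpair 0)), ?_⟩
    have h1 : P.map (X i) = μ.map F := by
      rw [hX, ← hmap i]
      exact (AEMeasurable.map_map_of_aemeasurable
        (hFmeas.aemeasurable.mono_ac (by rw [hmap i])) (hpair i)).symm
    have h2 : P.map (X 0) = μ.map F := by
      rw [hX, ← hmap 0]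
      exact (AEMeasurable.map_map_of_aemeasurable
        (hFmeas.aemeasurable.mono_ac (by rw [hmap 0])) (hpair 0)).symm
    rw [h1, h2]
  have hindep : Pairwise (Function.onFun (IndepFun · · P) X) := by
    intro i j hij
    exact (hind.indepFun hij).comp hFmeas hFmeas
  have hint : Integrable (X 0) P := by
    refine Integrable.mono' (integrable_const 1) (hXmeas 0) (ae_of_all _ fun ω => hFbd _)
  have hexp : ∫ ω, X 0 ω ∂P = (μ (Aset xs z)).toReal := by
    have : ∫ ω, X 0 ω ∂P = ∫ p, F p ∂(P.map (fun ω => (W 0 ω, B 0 ω))) := by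
      rw [integral_map (hpair 0) (by
        rw [hmap 0]
        exact hFmeas.aestronglyMeasurable)]
    rw [this, hmap 0, hF, integral_indicator_one (measurableSet_Aset xs z), Measure.real]
  have hslln := strong_law_ae_real X hint hindep hident
  rw [hexp] at hslln
  refine hslln.mono fun ω hω => ?_
  have heq : ∀ n : ℕ, (∑ i ∈ Finset.range n,
      (if Thres (⟪W i ω, xs⟫ + B i ω) = 0 then (1:ℝ) else 0) * Thres (⟪W i ω, z⟫ + B i ω))
        = ∑ i ∈ Finset.range n, X i ω := by
    intro n
    exact Finset.sum_congr rfl fun i _ => congrFun (Ffun_eq_indicator xs z) (W i ω, B i ω)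
  simpa only [heq] using hω

end SLLN

end StmtAux


/-- Proposition 8, limit shape of activation regions: in the double limit
`λ → ∞`, `n → ∞`, the dedicated neuron of `x*⁻` activates precisely on the open ball around
`x*⁻` of radius `dist(x*⁻, X⁺)`. -/
theorem limit_shape_activation_regions
    (d : ℕ) (Xp : Finset (EuclideanSpace ℝ (Fin d))) (hXp : Xp.Nonempty)
    (xs x : EuclideanSpace ℝ (Fin d)) :
    (‖x - xs‖ < Metric.infDist xs (Xp : Set (EuclideanSpace ℝ (Fin d))) →
      ∃ Λ : ℝ, 0 < Λ ∧ ∀ lam : ℝ, Λ < lam →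
        ∀ (Ω : Type) (_ : MeasurableSpace Ω) (P : Measure Ω), IsProbabilityMeasure P →
          ∀ (W : ℕ → Ω → EuclideanSpace ℝ (Fin d)) (B : ℕ → Ω → ℝ),
            iIndepFun (fun i ω => (W i ω, B i ω)) P →
            (∀ i, P.map (fun ω => (W i ω, B i ω)) = (stdGaussian d).prod (unifIcc lam)) →
            ∀ᵐ ω ∂P, ∃ N : ℕ, ∀ n > N,
              (∑ i ∈ Finset.range n, (if Thres (⟪W i ω, xs⟫ + B i ω) = 0 then (1 : ℝ) else 0) *
                  Thres (⟪W i ω, x⟫ + B i ω)) <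
                Xp.inf' hXp (fun xp => ∑ i ∈ Finset.range n,
                  (if Thres (⟪W i ω, xs⟫ + B i ω) = 0 then (1 : ℝ) else 0) *
                    Thres (⟪W i ω, xp⟫ + B i ω))) ∧
    (Metric.infDist xs (Xp : Set (EuclideanSpace ℝ (Fin d))) < ‖x - xs‖ →
      ∃ Λ : ℝ, 0 < Λ ∧ ∀ lam : ℝ, Λ < lam →
        ∀ (Ω : Type) (_ : MeasurableSpace Ω) (P : Measure Ω), IsProbabilityMeasure P →
          ∀ (W : ℕ → Ω → EuclideanSpace ℝ (Fin d)) (B : ℕ → Ω → ℝ),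
            iIndepFun (fun i ω => (W i ω, B i ω)) P →
            (∀ i, P.map (fun ω => (W i ω, B i ω)) = (stdGaussian d).prod (unifIcc lam)) →
            ∀ᵐ ω ∂P, ∃ N : ℕ, ∀ n > N,
              Xp.inf' hXp (fun xp => ∑ i ∈ Finset.range n,
                  (if Thres (⟪W i ω, xs⟫ + B i ω) = 0 then (1 : ℝ) else 0) *
                    Thres (⟪W i ω, xp⟫ + B i ω)) ≤
                ∑ i ∈ Finset.range n, (if Thres (⟪W i ω, xs⟫ + B i ω) = 0 then (1 : ℝ) else 0) *
                  Thres (⟪W i ω, x⟫ + B i ω)) := by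
  classical
  haveI := StmtAux.isProbabilityMeasure_stdGaussian d
  constructor
  · intro hlt
    have hdist : ∀ xp ∈ Xp, ‖x - xs‖ < ‖xp - xs‖ := by
      intro xp hxp
      calc ‖x - xs‖ < Metric.infDist xs (Xp : Set (EuclideanSpace ℝ (Fin d))) := hlt
      _ ≤ dist xs xp := Metric.infDist_le_dist_of_mem (by exact_mod_cast hxp)
      _ = ‖xp - xs‖ := by rw [dist_eq_norm, norm_sub_rev]
    have key : ∀ xp : EuclideanSpace ℝ (Fin d), ∃ Λ : ℝ, 0 < Λ ∧ ∀ lam : ℝ, Λ < lam →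
        xp ∈ Xp → ((stdGaussian d).prod (unifIcc lam)) (StmtAux.Aset xs x) <
          ((stdGaussian d).prod (unifIcc lam)) (StmtAux.Aset xs xp) := by
      intro xp
      by_cases hxp : xp ∈ Xp
      · obtain ⟨Λ, h1, h2⟩ := StmtAux.exists_Lam xs x xp (hdist xp hxp)
        exact ⟨Λ, h1, fun lam hl _ => h2 lam hl⟩
      · exact ⟨1, one_pos, fun lam _ h => absurd h hxp⟩
    choose Λf hΛpos hΛspec using key
    obtain ⟨x0, hx0⟩ := hXp
    have hsup_pos : 0 < Xp.sup' ⟨x0, hx0⟩ Λf :=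
      lt_of_lt_of_le (hΛpos x0) (Finset.le_sup' Λf hx0)
    refine ⟨Xp.sup' ⟨x0, hx0⟩ Λf, hsup_pos, ?_⟩
    intro lam hlam Ω mΩ P hP W B hind hmap
    haveI := hP
    have hl : 0 < lam := lt_trans hsup_pos hlam
    haveI := StmtAux.unifIcc_isProb hl
    have hae : ∀ᵐ ω ∂P, ∀ z ∈ ((insert x Xp : Finset _) : Set (EuclideanSpace ℝ (Fin d))),
        Tendsto (fun n : ℕ => (∑ i ∈ Finset.range n,
          (if Thres (⟪W i ω, xs⟫ + B i ω) = 0 then (1 : ℝ) else 0) *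
            Thres (⟪W i ω, z⟫ + B i ω)) / n) atTop
          (𝓝 ((((stdGaussian d).prod (unifIcc lam)) (StmtAux.Aset xs z)).toReal)) := by
      rw [ae_ball_iff (Finset.countable_toSet _)]
      exact fun z _ => StmtAux.slln_Ffun xs z hl P W B hind hmap
    filter_upwards [hae] with ω hω
    have hev : ∀ᶠ n : ℕ in atTop, (∀ xp ∈ Xp,
        (∑ i ∈ Finset.range n, (if Thres (⟪W i ω, xs⟫ + B i ω) = 0 then (1 : ℝ) else 0) *
          Thres (⟪W i ω, x⟫ + B i ω)) / n <
        (∑ i ∈ Finset.range n, (if Thres (⟪W i ω, xs⟫ + B i ω) = 0 then (1 : ℝ) else 0) *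
          Thres (⟪W i ω, xp⟫ + B i ω)) / n) ∧ 1 ≤ n := by
      refine Eventually.and ?_ (eventually_ge_atTop 1)
      rw [eventually_all_finset]
      intro xp hxp
      refine Tendsto.eventually_lt (hω x (by simp)) (hω xp (by simp [hxp])) ?_
      have hmeas_lt := hΛspec xp lam (lt_of_le_of_lt (Finset.le_sup' Λf hxp) hlam) hxp
      exact (ENNReal.toReal_lt_toReal (measure_ne_top _ _) (measure_ne_top _ _)).mpr hmeas_lt
    obtain ⟨N, hN⟩ := eventually_atTop.mp hev
    refine ⟨N, fun n hn => ?_⟩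
    obtain ⟨h1, h2⟩ := hN n hn.le
    refine (Finset.lt_inf'_iff _).mpr ?_
    intro xp hxp
    have hx' := h1 xp hxp
    have hnpos : (0:ℝ) < n := by exact_mod_cast h2
    have h3 := mul_lt_mul_of_pos_right hx' hnpos
    rwa [div_mul_cancel₀ _ (ne_of_gt hnpos), div_mul_cancel₀ _ (ne_of_gt hnpos)] at h3
  · intro hlt
    obtain ⟨xp0, hxp0mem, hxp0⟩ : ∃ y ∈ Xp, ‖y - xs‖ < ‖x - xs‖ := by
      obtain ⟨y, hy, hdy⟩ := (Metric.infDist_lt_iff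
        (Finset.coe_nonempty.mpr hXp)).mp hlt
      refine ⟨y, by exact_mod_cast hy, ?_⟩
      rwa [show ‖y - xs‖ = dist xs y by rw [dist_eq_norm, norm_sub_rev]]
    obtain ⟨Λ, hΛpos, hspec⟩ := StmtAux.exists_Lam xs xp0 x hxp0
    refine ⟨Λ, hΛpos, ?_⟩
    intro lam hlam Ω mΩ P hP W B hind hmap
    haveI := hP
    have hl : 0 < lam := lt_trans hΛpos hlam
    haveI := StmtAux.unifIcc_isProb hl
    have hae : ∀ᵐ ω ∂P, ∀ z ∈ ((insert x Xp : Finset _) : Set (EuclideanSpace ℝ (Fin d))),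
        Tendsto (fun n : ℕ => (∑ i ∈ Finset.range n,
          (if Thres (⟪W i ω, xs⟫ + B i ω) = 0 then (1 : ℝ) else 0) *
            Thres (⟪W i ω, z⟫ + B i ω)) / n) atTop
          (𝓝 ((((stdGaussian d).prod (unifIcc lam)) (StmtAux.Aset xs z)).toReal)) := by
      rw [ae_ball_iff (Finset.countable_toSet _)]
      exact fun z _ => StmtAux.slln_Ffun xs z hl P W B hind hmap
    filter_upwards [hae] with ω hω
    have hev : ∀ᶠ n : ℕ in atTop,
        ((∑ i ∈ Finset.range n, (if Thres (⟪W i ω, xs⟫ + B i ω) = 0 then (1 : ℝ) else 0) *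
          Thres (⟪W i ω, xp0⟫ + B i ω)) / n <
        (∑ i ∈ Finset.range n, (if Thres (⟪W i ω, xs⟫ + B i ω) = 0 then (1 : ℝ) else 0) *
          Thres (⟪W i ω, x⟫ + B i ω)) / n) ∧ 1 ≤ n := by
      refine Eventually.and ?_ (eventually_ge_atTop 1)
      refine Tendsto.eventually_lt (hω xp0 (by simp [hxp0mem])) (hω x (by simp)) ?_
      exact (ENNReal.toReal_lt_toReal (measure_ne_top _ _) (measure_ne_top _ _)).mpr
        (hspec lam hlam)
    obtain ⟨N, hN⟩ := eventually_atTop.mp hev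
    refine ⟨N, fun n hn => ?_⟩
    obtain ⟨h1, h2⟩ := hN n hn.le
    have hnpos : (0:ℝ) < n := by exact_mod_cast h2
    have h3 := mul_lt_mul_of_pos_right h1 hnpos
    rw [div_mul_cancel₀ _ (ne_of_gt hnpos), div_mul_cancel₀ _ (ne_of_gt hnpos)] at h3
    exact le_trans (Finset.inf'_le _ hxp0mem) h3.le
end

section
/- Let σ: ℝ → ℝ be non-decreasing with σ(t) = 0 for t ≤ 0 and σ(t) > 0 for t > 0. Let X⁺ ⊂ ℝ^d be a nonempty finite set, let w_1, …, w_n ∈ ℝ^d and b_1, …, b_n ∈ ℝ, and define Φ: ℝ^d → ℝ^n by Φ_i(x) = σ(⟨w_i, x⟩ + b_i). Let x*⁻, x⁻ ∈ ℝ^d with x*⁻ ≠ x⁻, define u ∈ {0,1}^n by u_i = 1 if Φ_i(x*⁻) = 0 and u_i = 0 otherwise, and m = min_{x⁺ ∈ X⁺} ⟨u, Φ(x⁺)⟩. Suppose there exists t⁺ ∈ (0, 1) such that x*⁻ + t⁺·(x⁻ − x*⁻) ∈ X⁺. Then ⟨u, Φ(x⁻)⟩ ≥ m, and consequently σ(−⟨u,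 Φ(x⁻)⟩ + m) = 0. -/
open scoped RealInnerProductSpace BigOperators

/-- step in the proof of Proposition 14: if some point of `X⁺` lies strictly
between `x*⁻` and `x⁻` on the segment joining them, then the neuron dedicated to `x*⁻` does
not activate on `Φ(x⁻)`. -/
theorem neuron_blocked_by_intermediate_point
    (d n : ℕ) (σ : ℝ → ℝ) (hmono : Monotone σ)
    (hσ0 : ∀ t : ℝ, t ≤ 0 → σ t = 0) (hσpos : ∀ t : ℝ, 0 < t → 0 < σ t)
    (Xp : Finset (EuclideanSpace ℝ (Fin d))) (hXp : Xp.Nonempty)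
    (w : Fin n → EuclideanSpace ℝ (Fin d)) (b : Fin n → ℝ)
    (Φ : EuclideanSpace ℝ (Fin d) → Fin n → ℝ)
    (hΦ : ∀ x i, Φ x i = σ (⟪w i, x⟫ + b i))
    (xs xm : EuclideanSpace ℝ (Fin d)) (hne : xs ≠ xm)
    (u : Fin n → ℝ) (hu : ∀ i, u i = if Φ xs i = 0 then 1 else 0)
    (m : ℝ) (hm : m = Xp.inf' hXp (fun xp => ∑ i, u i * Φ xp i))
    (tp : ℝ) (htp : tp ∈ Set.Ioo (0 : ℝ) 1)
    (hmem : xs + tp • (xm - xs) ∈ Xp) :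
    m ≤ (∑ i, u i * Φ xm i) ∧ σ (-(∑ i, u i * Φ xm i) + m) = 0 := by
  obtain ⟨htp0, htp1⟩ := htp
  have key : m ≤ ∑ i, u i * Φ xm i := by
    have h1 : m ≤ ∑ i, u i * Φ (xs + tp • (xm - xs)) i := by
      rw [hm]; exact Finset.inf'_le _ hmem
    refine h1.trans (Finset.sum_le_sum fun i _ => ?_)
    rw [hu i]
    by_cases h : Φ xs i = 0
    · simp only [h, if_pos, one_mul]
      have ha : ⟪w i, xs⟫ + b i ≤ 0 := by
        by_contra hc
        push_neg at hc
        have := hσpos _ hc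
        rw [hΦ xs i] at h; linarith
      rw [hΦ, hΦ]
      have hinner : ⟪w i, xs + tp • (xm - xs)⟫ + b i
          = (1 - tp) * (⟪w i, xs⟫ + b i) + tp * (⟪w i, xm⟫ + b i) := by
        rw [inner_add_right, inner_smul_right, inner_sub_right]; ring
      rw [hinner]
      set a := ⟪w i, xs⟫ + b i
      set c := ⟪w i, xm⟫ + b i
      rcases le_or_gt c 0 with hc | hc
      · rw [hσ0 _ (by nlinarith), hσ0 _ hc]
      · exact hmono (by nlinarith)
    · simp [h]
  exact ⟨key, hσ0 _ (by linarith)⟩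
end

section
/- Let σ: ℝ → ℝ be non-decreasing with σ(t) = 0 for t ≤ 0 and σ(t) > 0 for t > 0. Let M⁻ ≥ 2 and M⁺ = M⁻ − 1, and in ℝ (dimension d = 1) define X⁻ = { (ℓ−1)/(M⁻−1) : ℓ ∈ [M⁻] } and X⁺ = { (j−1/2)/(M⁻−1) : j ∈ [M⁺] }. Let n ≥ 1, let w_1, …, w_n ∈ ℝ and b_1, …, b_n ∈ ℝ be arbitrary, and define Φ: ℝ → ℝ^n by Φ_i(x) = σ(w_i·x + b_i). For y ∈ X⁻ define u_y ∈ {0,1}^n by (u_y)_i = 1 if Φ_i(y) = 0 and (u_y)_i = 0 otherwise, and m_y = min_{x⁺ ∈ X⁺} ⟨u_y, Φ(x⁺)⟩. If S ⊆ X⁻ is such that for every c ∈ X⁻ there exists y ∈ S with ⟨u_y, Φ(c)⟩ < m_y, then S = X⁻; in particular |S| ≥ M⁻. -/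
open scoped BigOperators

/-- (Proposition 15, sharpness of the bound on the second layer: for the
alternating one-dimensional data set, any selection of dedicated neurons that correctly
classifies all points of `X⁻` must use a neuron for every single point of `X⁻`). -/
theorem worst_case_second_layer_width
    (σ : ℝ → ℝ) (hmono : Monotone σ)
    (hσ0 : ∀ t : ℝ, t ≤ 0 → σ t = 0) (hσpos : ∀ t : ℝ, 0 < t → 0 < σ t)
    (Mm Mp : ℕ) (hMm : 2 ≤ Mm) (hMp : Mp = Mm - 1)
    (Xm Xp : Finset ℝ)
    (hXmdef : Xm = (Finset.range Mm).image (fun ℓ : ℕ => (ℓ : ℝ) / ((Mm : ℝ) - 1)))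
    (hXpdef : Xp = (Finset.range Mp).image (fun j : ℕ => ((j : ℝ) + 1 / 2) / ((Mm : ℝ) - 1)))
    (hXp : Xp.Nonempty)
    (n : ℕ) (hn : 1 ≤ n) (w : Fin n → ℝ) (b : Fin n → ℝ)
    (Φ : ℝ → Fin n → ℝ) (hΦ : ∀ x i, Φ x i = σ (w i * x + b i))
    (u : ℝ → Fin n → ℝ) (hu : ∀ y i, u y i = if Φ y i = 0 then 1 else 0)
    (m : ℝ → ℝ) (hm : ∀ y, m y = Xp.inf' hXp (fun xp => ∑ i, u y i * Φ xp i))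
    (S : Finset ℝ) (hS : S ⊆ Xm)
    (hclass : ∀ c ∈ Xm, ∃ y ∈ S, (∑ i, u y i * Φ c i) < m y) :
    S = Xm ∧ Mm ≤ S.card := by
  have hD : (0:ℝ) < (Mm : ℝ) - 1 := by
    have : (2:ℝ) ≤ (Mm : ℝ) := by exact_mod_cast hMm
    linarith
  have hσnn : ∀ t : ℝ, 0 ≤ σ t := fun t => by
    have h0 : σ (min t 0) = 0 := hσ0 _ (min_le_right t 0)
    have := hmono (min_le_left t 0)
    linarith
  have hXmS : Xm ⊆ S := by
    intro c hc
    obtain ⟨y, hyS, hlt⟩ := hclass c hc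
    have hyXm := hS hyS
    rw [hXmdef] at hc hyXm
    obtain ⟨ℓc, hℓc, hcval⟩ := Finset.mem_image.mp hc
    obtain ⟨ℓy, hℓy, hyval⟩ := Finset.mem_image.mp hyXm
    simp only [Finset.mem_range] at hℓc hℓy
    by_cases hcy : c = y
    · exact hcy ▸ hyS
    exfalso
    have hℓne : ℓc ≠ ℓy := by
      intro h; apply hcy; rw [← hcval, ← hyval, h]
    have hjlt : min ℓc ℓy + 1 ≤ max ℓc ℓy := by omega
    set j : ℕ := min ℓc ℓy with hjdef
    have hjMp : j ∈ Finset.range Mp := by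
      rw [Finset.mem_range, hMp]
      have h2 : max ℓc ℓy < Mm := max_lt hℓc hℓy
      omega
    set z : ℝ := ((j : ℝ) + 1 / 2) / ((Mm : ℝ) - 1) with hzdef
    have hzXp : z ∈ Xp := by
      rw [hXpdef]; exact Finset.mem_image.mpr ⟨j, hjMp, rfl⟩
    -- bounds: min c y ≤ z ≤ max c y
    have hmineq : min c y = (min ℓc ℓy : ℕ) / ((Mm:ℝ) - 1) := by
      rw [← hcval, ← hyval, min_div_div_right hD.le]
      push_cast
      ring_nf
    have hmaxeq : max c y = (max ℓc ℓy : ℕ) / ((Mm:ℝ) - 1) := by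
      rw [← hcval, ← hyval, max_div_div_right hD.le]
      push_cast
      ring_nf
    have hminz : min c y ≤ z := by
      rw [hmineq, hzdef]
      gcongr
      rw [hjdef]
      linarith
    have hzmax : z ≤ max c y := by
      rw [hmaxeq, hzdef]
      have hcast : ((ℓc ⊓ ℓy : ℕ) : ℝ) + 1 ≤ ((ℓc ⊔ ℓy : ℕ) : ℝ) := by exact_mod_cast hjlt
      gcongr
      rw [hjdef]
      linarith
    -- termwise bound
    have hterm : ∀ i, u y i * Φ z i ≤ u y i * Φ c i := by
      intro i
      by_cases h0 : Φ y i = 0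
      · rw [hu, if_pos h0, one_mul, one_mul]
        have hkey : Φ z i ≤ max (Φ c i) (Φ y i) := by
          rw [hΦ, hΦ, hΦ]
          rcases le_total 0 (w i) with hw | hw
          · have h1 : w i * z + b i ≤ w i * max c y + b i := by
              have := mul_le_mul_of_nonneg_left hzmax hw
              linarith
            have h2 := hmono h1
            rcases max_cases c y with ⟨he, _⟩ | ⟨he, _⟩ <;> rw [he] at h2
            · exact le_trans h2 (le_max_left _ _)
            · exact le_trans h2 (le_max_right _ _)
          · have h1 : w i * z + b i ≤ w i * min c y + b i := by
              have := mul_le_mul_of_nonpos_left hminz hw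
              linarith
            have h2 := hmono h1
            rcases min_cases c y with ⟨he, _⟩ | ⟨he, _⟩ <;> rw [he] at h2
            · exact le_trans h2 (le_max_left _ _)
            · exact le_trans h2 (le_max_right _ _)
        rw [h0] at hkey
        have : max (Φ c i) 0 = Φ c i := max_eq_left (by rw [hΦ]; exact hσnn _)
        linarith [this ▸ hkey]
      · rw [hu, if_neg h0]; simp
    have hsum : ∑ i, u y i * Φ z i ≤ ∑ i, u y i * Φ c i :=
      Finset.sum_le_sum (fun i _ => hterm i)
    have hinf : m y ≤ ∑ i, u y i * Φ z i := by
      rw [hm]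
      exact Finset.inf'_le _ hzXp
    linarith
  have hEq : S = Xm := le_antisymm hS hXmS
  refine ⟨hEq, ?_⟩
  rw [hEq, hXmdef, Finset.card_image_of_injective _ ?_, Finset.card_range]
  intro a c h
  have hne : ((Mm:ℝ) - 1) ≠ 0 := ne_of_gt hD
  field_simp at h
  exact_mod_cast h
end
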